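/- arXiv:1806.00410 — 6 statements merged into one kernel-verified Lean document; each statement's English description precedes it below -/
import Mathlib

section
/- Suppose $X$ is a $d$-tuple of $n\times n$ matrices and $Y$ is a $d$-tuple of $m\times m$ matrices, each jointly similar to a strict row contraction. Then for any $d$-tuple $Z$ of $n\times m$ matrices, the block upper triangular $d$-tuple with diagonal blocks $X$ and $Y$ and off-diagonal block $Z$, i.e., $\left(\begin{bmatrix} X_j & Z_j \\ 0 & Y_j \end{bmatrix}\right)_{j=1}^d$, is jointly similar to a strict row contraction. -/
open scoped Matrix ComplexOrder

/-- A `d`-tuple of square matrices is jointly similar to a strict row contraction. -/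
def SimilarToStrictRowContraction {d : ℕ} {N : Type*} [Fintype N] [DecidableEq N]
    (X : Fin d → Matrix N N ℂ) : Prop :=
  ∃ S : Matrix N N ℂ, IsUnit S ∧
    (1 - ∑ j, (S⁻¹ * X j * S) * (S⁻¹ * X j * S)ᴴ).PosDef

/-!
Conjugating by block-diagonal matrices reduces to the case where `X` and `Y` are strict row
contractions `A` and `B`, and a further conjugation by `diag(1, t)` replaces `Z` by `t • C`.
The defect `1 - ∑ Mⱼ Mⱼᴴ` of the resulting tuple is the block matrix
`[[P - t² R, -t E], [-t Eᴴ, Q]]`, where `P = 1 - ∑ Aⱼ Aⱼᴴ`, `Q = 1 - ∑ Bⱼ Bⱼᴴ`,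
`R = ∑ Cⱼ Cⱼᴴ` and `E = ∑ Cⱼ Bⱼᴴ`. Since `Q > 0`, it is positive definite as soon as its Schur
complement `P - t² (R + E Q⁻¹ Eᴴ)` is, which holds for small `t` because `P > 0`.
-/

open Matrix

theorem IsStrictlyPositive.exists_pos_sub_smul {A : Type*} [TopologicalSpace A] [Ring A]
    [StarRing A] [PartialOrder A] [StarOrderedRing A] [Algebra ℝ A] [StarModule ℝ A]
    [NonnegSpectrumClass ℝ A] [ContinuousFunctionalCalculus ℝ A IsSelfAdjoint]
    {a b : A} (ha : IsStrictlyPositive a) (hb : IsSelfAdjoint b) :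
    ∃ ε : ℝ, 0 < ε ∧ IsStrictlyPositive (a - ε • b) := by
  cases subsingleton_or_nontrivial A
  · exact ⟨1, one_pos, .of_subsingleton⟩
  obtain ⟨r, hr, hra⟩ := (CFC.exists_pos_algebraMap_le_iff ha.isSelfAdjoint).2
    fun _ hx => ha.spectrum_pos hx
  obtain ⟨c, hc⟩ := (ContinuousFunctionalCalculus.isCompact_spectrum (R := ℝ) b).bddAbove
  set c' := max c 1
  have hbc : b ≤ algebraMap ℝ A c' :=
    le_algebraMap_of_spectrum_le fun x hx => (hc hx).trans (le_max_left _ _)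
  have hc' : 0 < c' := lt_max_of_lt_right one_pos
  set ε := r / (2 * c') with hε_def
  have hε : 0 < ε := by positivity
  have hεc : r - ε * c' = r / 2 := by rw [hε_def]; field_simp; ring
  have hsa : IsSelfAdjoint (a - ε • b) := ha.isSelfAdjoint.sub ((IsSelfAdjoint.all ε).smul hb)
  have hle : algebraMap ℝ A (r / 2) ≤ a - ε • b :=
    calc algebraMap ℝ A (r / 2) = algebraMap ℝ A r - ε • algebraMap ℝ A c' := by
          rw [Algebra.smul_def, ← map_mul, ← map_sub, hεc]
      _ ≤ a - ε • b := sub_le_sub hra (smul_le_smul_of_nonneg_left hbc hε.le)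
  refine ⟨ε, hε, (StarOrderedRing.isStrictlyPositive_iff_spectrum_pos (R := ℝ) _ hsa).2
    fun x hx => ?_⟩
  exact (half_pos hr).trans_le ((algebraMap_le_iff_le_spectrum hsa).1 hle x hx)

namespace Matrix

variable {ι l m α 𝕜 : Type*}

theorem fromBlocks_sum [AddCommMonoid α] (s : Finset ι) (A : ι → Matrix l l α)
    (B : ι → Matrix l m α) (C : ι → Matrix m l α) (D : ι → Matrix m m α) :
    ∑ j ∈ s, fromBlocks (A j) (B j) (C j) (D j) =
      fromBlocks (∑ j ∈ s, A j) (∑ j ∈ s, B j) (∑ j ∈ s, C j) (∑ j ∈ s, D j) := by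
  ext (i | i) (k | k) <;> simp [sum_apply]

theorem fromBlocks_sub [Sub α] (A A' : Matrix l l α) (B B' : Matrix l m α)
    (C C' : Matrix m l α) (D D' : Matrix m m α) :
    fromBlocks A B C D - fromBlocks A' B' C' D' =
      fromBlocks (A - A') (B - B') (C - C') (D - D') := by
  ext (i | i) (k | k) <;> rfl

variable [Fintype l] [Fintype m]

theorem fromBlocks_zero₂₁_mul_conjTranspose [NonUnitalNonAssocSemiring α] [StarRing α]
    (A : Matrix l l α) (B : Matrix l m α) (D : Matrix m m α) :
    fromBlocks A B 0 D * (fromBlocks A B 0 D)ᴴ =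
      fromBlocks (A * Aᴴ + B * Bᴴ) (B * Dᴴ) (D * Bᴴ) (D * Dᴴ) := by
  simp [fromBlocks_conjTranspose, fromBlocks_multiply]

variable [DecidableEq l] [DecidableEq m]

theorem inv_fromBlocks_mul_fromBlocks_zero₂₁_mul [CommRing α] {S : Matrix l l α}
    {T : Matrix m m α} (hS : IsUnit S) (hT : IsUnit T)
    (A : Matrix l l α) (B : Matrix l m α) (D : Matrix m m α) :
    (fromBlocks S 0 0 T)⁻¹ * fromBlocks A B 0 D * fromBlocks S 0 0 T =
      fromBlocks (S⁻¹ * A * S) (S⁻¹ * B * T) 0 (T⁻¹ * D * T) := by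
  rw [inv_fromBlocks_zero₂₁_of_isUnit_iff _ _ _ (iff_of_true hS hT)]
  simp [fromBlocks_multiply, Matrix.mul_assoc]

variable [RCLike 𝕜]

theorem PosDef.fromBlocks₂₂_of_schur {A : Matrix l l 𝕜} (B : Matrix l m 𝕜)
    {D : Matrix m m 𝕜} (hD : D.PosDef) (h : (A - B * D⁻¹ * Bᴴ).PosDef) :
    (fromBlocks A B Bᴴ D).PosDef := by
  have := hD.isUnit.invertible
  refine ((PosDef.fromBlocks₂₂ A B hD).2 h.posSemidef).posDef_iff_det_ne_zero.2 ?_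
  rw [det_fromBlocks₂₂, invOf_eq_nonsing_inv]
  exact mul_ne_zero hD.det_pos.ne' h.det_pos.ne'

open scoped MatrixOrder in
theorem PosDef.exists_pos_sub_smul {P N : Matrix l l 𝕜} (hP : P.PosDef) (hN : N.IsHermitian) :
    ∃ ε : ℝ, 0 < ε ∧ (P - ε • N).PosDef := by
  obtain ⟨ε, hε, h⟩ := hP.isStrictlyPositive.exists_pos_sub_smul hN
  exact ⟨ε, hε, isStrictlyPositive_iff_posDef.1 h⟩

end Matrix

theorem exists_posDef_one_sub_sum_fromBlocks_smul {ι l m 𝕜 : Type*} [Fintype ι] [Fintype l]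
    [Fintype m] [DecidableEq l] [DecidableEq m] [RCLike 𝕜]
    {A : ι → Matrix l l 𝕜} {B : ι → Matrix m m 𝕜}
    (hA : (1 - ∑ j, A j * (A j)ᴴ).PosDef) (hB : (1 - ∑ j, B j * (B j)ᴴ).PosDef)
    (C : ι → Matrix l m 𝕜) :
    ∃ t : ℝ, 0 < t ∧ (1 - ∑ j, fromBlocks (A j) (t • C j) 0 (B j) *
      (fromBlocks (A j) (t • C j) 0 (B j))ᴴ).PosDef := by
  set Q := 1 - ∑ j, B j * (B j)ᴴ
  set E := ∑ j, C j * (B j)ᴴ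
  set R := ∑ j, C j * (C j)ᴴ
  have hdefect : ∀ t : ℝ, 1 - ∑ j, fromBlocks (A j) (t • C j) 0 (B j) *
      (fromBlocks (A j) (t • C j) 0 (B j))ᴴ =
      fromBlocks ((1 - ∑ j, A j * (A j)ᴴ) - (t * t) • R) (-(t • E)) (-(t • E))ᴴ Q := by
    intro t
    simp only [fromBlocks_zero₂₁_mul_conjTranspose, fromBlocks_sum, ← fromBlocks_one,
      fromBlocks_sub]
    congr 1 <;> simp [R, E, conjTranspose_sum, Finset.sum_add_distrib, Finset.smul_sum,
      smul_smul, sub_sub]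
  have hN : (R + E * Q⁻¹ * Eᴴ).IsHermitian :=
    (isSelfAdjoint_sum _ fun j _ => isHermitian_mul_conjTranspose_self (C j)).add
      (isHermitian_mul_mul_conjTranspose E hB.1.inv)
  obtain ⟨ε, hε, hAε⟩ := hA.exists_pos_sub_smul hN
  refine ⟨√ε, Real.sqrt_pos.2 hε, ?_⟩
  rw [hdefect]
  refine PosDef.fromBlocks₂₂_of_schur _ hB ?_
  convert hAε using 1
  simp [smul_smul, Real.mul_self_sqrt hε.le, smul_add, sub_sub, add_assoc]

namespace SimilarToStrictRowContraction

variable {d : ℕ} {N : Type*} [Fintype N] [DecidableEq N]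

theorem of_conj {X : Fin d → Matrix N N ℂ} {S : Matrix N N ℂ} (hS : IsUnit S)
    (h : SimilarToStrictRowContraction fun j => S⁻¹ * X j * S) :
    SimilarToStrictRowContraction X := by
  obtain ⟨W, hW, hXW⟩ := h
  refine ⟨S * W, hS.mul hW, ?_⟩
  simpa only [Matrix.mul_inv_rev, Matrix.mul_assoc] using hXW

theorem fromBlocks_zero₂₁ {l m : Type*} [Fintype l] [Fintype m] [DecidableEq l]
    [DecidableEq m] {A : Fin d → Matrix l l ℂ} {B : Fin d → Matrix m m ℂ}
    (hA : (1 - ∑ j, A j * (A j)ᴴ).PosDef) (hB : (1 - ∑ j, B j * (B j)ᴴ).PosDef)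
    (C : Fin d → Matrix l m ℂ) :
    SimilarToStrictRowContraction fun j => fromBlocks (A j) (C j) 0 (B j) := by
  obtain ⟨t, ht, hdefect⟩ := exists_posDef_one_sub_sum_fromBlocks_smul hA hB C
  have htinv : (t • (1 : Matrix m m ℂ))⁻¹ = t⁻¹ • 1 :=
    inv_eq_left_inv (by simp [smul_smul, ht.ne'])
  have htunit : IsUnit (t • (1 : Matrix m m ℂ)) :=
    isUnit_iff_exists.2 ⟨t⁻¹ • 1, by simp [smul_smul, ht.ne'], by simp [smul_smul, ht.ne']⟩
  refine ⟨fromBlocks 1 0 0 (t • 1), isUnit_fromBlocks_zero₂₁.2 ⟨isUnit_one, htunit⟩, ?_⟩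
  simpa [inv_fromBlocks_mul_fromBlocks_zero₂₁_mul isUnit_one htunit, htinv, smul_smul,
    ht.ne'] using hdefect

end SimilarToStrictRowContraction

/-- If `X` and `Y` are jointly similar to strict row contractions, then so is any block
upper triangular tuple with diagonal blocks `X, Y` and off-diagonal blocks `Z`. -/
theorem stmt_1 {d n m : ℕ} (X : Fin d → Matrix (Fin n) (Fin n) ℂ)
    (Y : Fin d → Matrix (Fin m) (Fin m) ℂ) (Z : Fin d → Matrix (Fin n) (Fin m) ℂ)
    (hX : SimilarToStrictRowContraction X) (hY : SimilarToStrictRowContraction Y) :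
    SimilarToStrictRowContraction (fun j => Matrix.fromBlocks (X j) (Z j) 0 (Y j)) := by
  obtain ⟨S, hS, hSX⟩ := hX
  obtain ⟨T, hT, hTY⟩ := hY
  refine .of_conj (S := fromBlocks S 0 0 T) (isUnit_fromBlocks_zero₂₁.2 ⟨hS, hT⟩) ?_
  simp only [inv_fromBlocks_mul_fromBlocks_zero₂₁_mul hS hT]
  exact .fromBlocks_zero₂₁ hSX hTY _
end

section
/- For a $d$-tuple $X$ of $n\times n$ matrices, the following are equivalent: (i) $\rho(X) < 1$; (ii) $\|X^{(k)}\| \to 0$ as $k\to\infty$, where $X^{(k)}$ is the row of all degree-$k$ monomials in $X_1,\dots,X_d$; (iii) $X$ is jointly similar to a strict row contraction. -/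
open scoped Matrix ComplexOrder Matrix.Norms.L2Operator

/-- The completely positive map `Ψ_X(T) = ∑ⱼ Xⱼ T Xⱼ*` associated to a `d`-tuple of matrices. -/
noncomputable def Psi {d : ℕ} {N : Type*} [Fintype N] [DecidableEq N]
    (X : Fin d → Matrix N N ℂ) (T : Matrix N N ℂ) : Matrix N N ℂ :=
  ∑ j, X j * T * (X j)ᴴ

/-- The joint spectral radius `ρ(X) = lim_k ‖Ψ_X^k(I)‖^(1/(2k))`. -/
noncomputable def jsr {d : ℕ} {N : Type*} [Fintype N] [DecidableEq N]
    (X : Fin d → Matrix N N ℂ) : ℝ :=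
  Filter.limsup (fun k : ℕ => ‖(Psi X)^[k] 1‖ ^ (1 / (2 * (k : ℝ)))) Filter.atTop

/-!
`Ψ_X` is a positive linear map, so `Ψ_X^k(T) ≤ ‖T‖ Ψ_X^k(I)` for `T ≥ 0`. Hence `‖Ψ_X^k(I)‖` is
submultiplicative, and if `X` is similar to a tuple `Y` with `‖Ψ_Y(I)‖ = c < 1` then
`‖Ψ_X^k(I)‖ ≤ C c^k`, which gives `ρ(X) < 1`; conversely `ρ(X) < 1` forces `‖Ψ_X^k(I)‖ → 0` by the
root test. Once `‖Ψ_X^m(I)‖ < 1`, the matrix `P = ∑_{i<m} Ψ_X^i(I)` satisfies the Stein inequality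
`P - Ψ_X(P) = I - Ψ_X^m(I) > 0`, and conjugating by `S = P^{1/2}` turns it into `I - Ψ_Y(I) > 0`
for `Y = S⁻¹ X S`.
-/

open Filter Topology

lemma rpow_one_div_two_mul_le_iff {x r : ℝ} {k : ℕ} (hk : k ≠ 0) (hx : 0 ≤ x) (hr : 0 ≤ r) :
    x ^ (1 / (2 * (k : ℝ))) ≤ r ↔ x ≤ r ^ (2 * k) := by
  rw [one_div, Real.rpow_inv_le_iff_of_pos hx hr (by positivity)]
  norm_cast

lemma eventually_rpow_le_of_le_geometric {a : ℕ → ℝ} {C c r : ℝ} (hc : 0 ≤ c) (hr : 0 ≤ r)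
    (hcr : c < r ^ 2) (ha : ∀ k, 0 ≤ a k) (h : ∀ k, a k ≤ C * c ^ k) :
    ∀ᶠ k in atTop, a k ^ (1 / (2 * (k : ℝ))) ≤ r := by
  have hlo := ((isLittleO_pow_pow_of_lt_left hc hcr).const_mul_left C).bound one_pos
  filter_upwards [hlo, eventually_ne_atTop 0] with k hk hk0
  rw [rpow_one_div_two_mul_le_iff hk0 (ha k) hr, pow_mul]
  calc a k ≤ ‖C * c ^ k‖ := (h k).trans (Real.le_norm_self _)
    _ ≤ 1 * ‖(r ^ 2) ^ k‖ := hk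
    _ = (r ^ 2) ^ k := by rw [one_mul, Real.norm_of_nonneg (by positivity)]

lemma limsup_rpow_lt_one_of_le_geometric {a : ℕ → ℝ} {C c : ℝ} (hc0 : 0 ≤ c) (hc1 : c < 1)
    (ha : ∀ k, 0 ≤ a k) (h : ∀ k, a k ≤ C * c ^ k) :
    limsup (fun k => a k ^ (1 / (2 * (k : ℝ)))) atTop < 1 := by
  obtain ⟨r, hcr, hr1⟩ := exists_between ((Real.sqrt_lt' one_pos).2 (by rwa [one_pow]))
  have hr0 : 0 < r := (Real.sqrt_nonneg c).trans_lt hcr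
  calc limsup (fun k => a k ^ (1 / (2 * (k : ℝ)))) atTop ≤ r :=
        limsup_le_of_le (isCoboundedUnder_le_of_le atTop fun k => Real.rpow_nonneg (ha k) _)
          (eventually_rpow_le_of_le_geometric hc0 hr0.le ((Real.sqrt_lt' hr0).1 hcr) ha h)
    _ < 1 := hr1

-- Boundedness is needed because the `limsup` of an unbounded real sequence is the junk value `0`.
lemma tendsto_sqrt_zero_of_limsup_rpow_lt_one {a : ℕ → ℝ} (ha : ∀ k, 0 ≤ a k)
    (hbdd : IsBoundedUnder (· ≤ ·) atTop fun k => a k ^ (1 / (2 * (k : ℝ))))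
    (h : limsup (fun k => a k ^ (1 / (2 * (k : ℝ)))) atTop < 1) :
    Tendsto (fun k => √(a k)) atTop (𝓝 0) := by
  obtain ⟨r, hr, hr1⟩ := exists_between (max_lt h one_pos)
  have hr0 : 0 ≤ r := (le_max_right _ _).trans hr.le
  refine squeeze_zero' (.of_forall fun k => Real.sqrt_nonneg _) ?_
    (tendsto_pow_atTop_nhds_zero_of_lt_one hr0 hr1)
  filter_upwards [eventually_lt_of_limsup_lt ((le_max_left _ _).trans_lt hr) hbdd,
    eventually_ne_atTop 0] with k hk hk0
  rw [Real.sqrt_le_iff, ← pow_mul, mul_comm]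
  exact ⟨by positivity, (rpow_one_div_two_mul_le_iff hk0 (ha k) hr0).1 hk.le⟩

open Matrix
open scoped MatrixOrder

lemma mul_nonsing_inv_mul_mul {N R : Type*} [Fintype N] [DecidableEq N] [CommRing R]
    {S : Matrix N N R} (hS : IsUnit S) (A : Matrix N N R) : S * (S⁻¹ * A * S) = A * S := by
  rw [Matrix.mul_assoc, ← Matrix.mul_assoc S, mul_nonsing_inv S ((isUnit_iff_isUnit_det S).1 hS),
    Matrix.one_mul]

section Psi

variable {d : ℕ} {N : Type*} [Fintype N] [DecidableEq N] (X : Fin d → Matrix N N ℂ)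

noncomputable def psiLinearMap : Module.End ℂ (Matrix N N ℂ) where
  toFun := Psi X
  map_add' A B := by simp only [Psi, mul_add, add_mul, Finset.sum_add_distrib]
  map_smul' c A := by
    simp only [Psi, Finset.smul_sum, mul_smul_comm, smul_mul_assoc, RingHom.id_apply]

@[simp]
lemma psiLinearMap_apply (T : Matrix N N ℂ) : psiLinearMap X T = Psi X T := rfl

lemma iterate_psi_eq_pow_apply (k : ℕ) (T : Matrix N N ℂ) :
    (Psi X)^[k] T = (psiLinearMap X ^ k) T :=
  (Module.End.pow_apply (psiLinearMap X) k T).symm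

lemma psi_one : Psi X 1 = ∑ j, X j * (X j)ᴴ := by
  simp only [Psi, mul_one]

lemma psi_mono : Monotone (Psi X) := fun _ _ h =>
  Finset.sum_le_sum fun j _ => by
    simpa only [star_eq_conjTranspose] using star_right_conjugate_le_conjugate h (X j)

lemma iterate_psi_nonneg {T : Matrix N N ℂ} (hT : 0 ≤ T) (k : ℕ) : 0 ≤ (Psi X)^[k] T := by
  simpa only [iterate_psi_eq_pow_apply, map_zero] using (psi_mono X).iterate k hT

lemma psi_nonneg {T : Matrix N N ℂ} (hT : 0 ≤ T) : 0 ≤ Psi X T := by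
  simpa only [Function.iterate_one] using iterate_psi_nonneg X hT 1

lemma iterate_psi_le_norm_smul {T : Matrix N N ℂ} (hT : 0 ≤ T) (k : ℕ) :
    (Psi X)^[k] T ≤ ‖T‖ • (Psi X)^[k] 1 := by
  have := (psi_mono X).iterate k (IsSelfAdjoint.of_nonneg hT).le_algebraMap_norm_self
  rwa [Algebra.algebraMap_eq_smul_one, iterate_psi_eq_pow_apply X k (‖T‖ • 1),
    LinearMap.map_smul_of_tower, ← iterate_psi_eq_pow_apply] at this

lemma norm_iterate_psi_le {T : Matrix N N ℂ} (hT : 0 ≤ T) (k : ℕ) :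
    ‖(Psi X)^[k] T‖ ≤ ‖T‖ * ‖(Psi X)^[k] 1‖ := by
  have := CStarAlgebra.norm_le_norm_of_nonneg_of_le (iterate_psi_nonneg X hT k)
    (iterate_psi_le_norm_smul X hT k)
  rwa [norm_smul, norm_norm] at this

lemma norm_iterate_psi_one_le_pow (k : ℕ) : ‖(Psi X)^[k] 1‖ ≤ ‖Psi X 1‖ ^ k := by
  induction k with
  | zero => simpa using (CStarAlgebra.norm_le_one_iff_of_nonneg (1 : Matrix N N ℂ)).2 le_rfl
  | succ k ih =>
    rw [Function.iterate_succ_apply, pow_succ']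
    exact (norm_iterate_psi_le X (psi_nonneg X zero_le_one) k).trans
      (mul_le_mul_of_nonneg_left ih (norm_nonneg _))

lemma sum_range_iterate_psi_sub_psi (m : ℕ) :
    ∑ i ∈ Finset.range m, (Psi X)^[i] 1 - Psi X (∑ i ∈ Finset.range m, (Psi X)^[i] 1)
      = 1 - (Psi X)^[m] 1 := by
  have hsum : Psi X (∑ i ∈ Finset.range m, (Psi X)^[i] 1)
      = ∑ i ∈ Finset.range m, (Psi X)^[i + 1] 1 := by
    simpa only [Function.iterate_succ_apply', psiLinearMap_apply] using
      map_sum (psiLinearMap X) (fun i => (Psi X)^[i] 1) (Finset.range m)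
  rw [hsum, ← Finset.sum_sub_distrib, Finset.sum_range_sub', Function.iterate_zero_apply]

lemma mul_psi_mul_conjTranspose_of_intertwine {Y : Fin d → Matrix N N ℂ} {S : Matrix N N ℂ}
    (h : ∀ j, S * Y j = X j * S) (T : Matrix N N ℂ) :
    S * Psi Y T * Sᴴ = Psi X (S * T * Sᴴ) := by
  simp only [Psi, Finset.mul_sum, Finset.sum_mul]
  refine Finset.sum_congr rfl fun j _ => ?_
  calc S * (Y j * T * (Y j)ᴴ) * Sᴴ = S * Y j * T * (S * Y j)ᴴ := by
        simp only [conjTranspose_mul, Matrix.mul_assoc]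
    _ = X j * (S * T * Sᴴ) * (X j)ᴴ := by simp only [h j, conjTranspose_mul, Matrix.mul_assoc]

lemma mul_iterate_psi_mul_conjTranspose_of_intertwine {Y : Fin d → Matrix N N ℂ}
    {S : Matrix N N ℂ} (h : ∀ j, S * Y j = X j * S) (k : ℕ) (T : Matrix N N ℂ) :
    S * (Psi Y)^[k] T * Sᴴ = (Psi X)^[k] (S * T * Sᴴ) :=
  Function.Semiconj.iterate_right (f := fun T => S * T * Sᴴ)
    (mul_psi_mul_conjTranspose_of_intertwine X h) k T

lemma norm_lt_one_iff_posDef_one_sub {A : Matrix N N ℂ} (hA : 0 ≤ A) :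
    ‖A‖ < 1 ↔ (1 - A).PosDef := by
  rw [← isStrictlyPositive_iff_posDef]
  constructor
  · intro h
    refine (isStrictlyPositive_algebraMap (A := Matrix N N ℂ) (sub_pos.2 h)).of_le ?_
    rw [map_sub, map_one, sub_le_sub_iff_left]
    exact (IsSelfAdjoint.of_nonneg hA).le_algebraMap_norm_self
  · intro h
    cases subsingleton_or_nontrivial (Matrix N N ℂ)
    · simp [Subsingleton.elim A 0]
    have hmem : 1 - ‖A‖ ∈ spectrum ℝ (1 - A) := by
      rw [← map_one (algebraMap ℝ (Matrix N N ℂ)), ← spectrum.singleton_sub_eq]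
      exact Set.sub_mem_sub rfl (CStarAlgebra.norm_mem_spectrum_of_nonneg hA)
    linarith [h.spectrum_pos hmem]

lemma exists_posDef_sub_psi_posDef {m : ℕ} (hm : ‖(Psi X)^[m] 1‖ < 1) :
    ∃ P : Matrix N N ℂ, P.PosDef ∧ (P - Psi X P).PosDef := by
  set P := ∑ i ∈ Finset.range m, (Psi X)^[i] 1
  have hstein : (P - Psi X P).PosDef := by
    rw [sum_range_iterate_psi_sub_psi]
    exact (norm_lt_one_iff_posDef_one_sub (iterate_psi_nonneg X zero_le_one m)).1 hm
  have hPsiP : 0 ≤ Psi X P :=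
    psi_nonneg X (Finset.sum_nonneg fun i _ => iterate_psi_nonneg X zero_le_one i)
  refine ⟨P, ?_, hstein⟩
  rw [← isStrictlyPositive_iff_posDef] at hstein ⊢
  simpa using hstein.add_nonneg hPsiP

lemma exists_similar_posDef_one_sub_psi_of_stein {P : Matrix N N ℂ} (hP : P.PosDef)
    (h : (P - Psi X P).PosDef) :
    ∃ S : Matrix N N ℂ, IsUnit S ∧ (1 - Psi (fun j => S⁻¹ * X j * S) 1).PosDef := by
  set S := CFC.sqrt P
  have hS : IsUnit S := hP.isStrictlyPositive.isUnit_cfcSqrt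
  have hSS : S * Sᴴ = P := by
    rw [← star_eq_conjTranspose, (CFC.sqrt_nonneg P).star_eq,
      CFC.sqrt_mul_sqrt_self P hP.posSemidef.nonneg]
  have hint : ∀ j, S * (S⁻¹ * X j * S) = X j * S := fun j => mul_nonsing_inv_mul_mul hS (X j)
  refine ⟨S, hS, ?_⟩
  rw [← hS.posDef_star_right_conjugate_iff, star_eq_conjTranspose, Matrix.mul_sub, Matrix.sub_mul,
    mul_psi_mul_conjTranspose_of_intertwine X hint, Matrix.mul_one, hSS]
  exact h

lemma norm_iterate_psi_one_le_of_similar {S : Matrix N N ℂ} (hS : IsUnit S) (k : ℕ) :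
    ‖(Psi X)^[k] 1‖ ≤ ‖S‖ ^ 2 * ‖S⁻¹ * (S⁻¹)ᴴ‖ * ‖Psi (fun j => S⁻¹ * X j * S) 1‖ ^ k := by
  set Y := fun j => S⁻¹ * X j * S
  set T := S⁻¹ * (S⁻¹)ᴴ
  have hint : ∀ j, S * Y j = X j * S := fun j => mul_nonsing_inv_mul_mul hS (X j)
  have hT : S * T * Sᴴ = 1 := by
    calc S * T * Sᴴ = S * S⁻¹ * (S * S⁻¹)ᴴ := by
          simp only [T, conjTranspose_mul, Matrix.mul_assoc]
      _ = 1 := by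
          rw [mul_nonsing_inv S ((isUnit_iff_isUnit_det S).1 hS), conjTranspose_one, Matrix.mul_one]
  have hT0 : 0 ≤ T := (posSemidef_self_mul_conjTranspose S⁻¹).nonneg
  calc ‖(Psi X)^[k] 1‖ = ‖S * (Psi Y)^[k] T * Sᴴ‖ := by
        rw [mul_iterate_psi_mul_conjTranspose_of_intertwine X hint, hT]
    _ ≤ ‖S‖ * ‖(Psi Y)^[k] T‖ * ‖Sᴴ‖ :=
        (norm_mul_le _ _).trans (mul_le_mul_of_nonneg_right (norm_mul_le _ _) (norm_nonneg _))
    _ ≤ ‖S‖ * (‖T‖ * ‖Psi Y 1‖ ^ k) * ‖S‖ := by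
        rw [l2_opNorm_conjTranspose]
        gcongr
        exact (norm_iterate_psi_le Y hT0 k).trans
          (mul_le_mul_of_nonneg_left (norm_iterate_psi_one_le_pow Y k) (norm_nonneg _))
    _ = ‖S‖ ^ 2 * ‖T‖ * ‖Psi Y 1‖ ^ k := by ring

lemma tendsto_sqrt_norm_iterate_psi_of_jsr_lt_one (h : jsr X < 1) :
    Tendsto (fun k => √‖(Psi X)^[k] 1‖) atTop (𝓝 0) := by
  have hc := norm_nonneg (Psi X 1)
  refine tendsto_sqrt_zero_of_limsup_rpow_lt_one (fun _ => norm_nonneg _) ?_ h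
  refine isBoundedUnder_of_eventually_le (eventually_rpow_le_of_le_geometric (C := 1)
    (r := ‖Psi X 1‖ + 1) hc (by positivity) (by nlinarith) (fun _ => norm_nonneg _) fun k => ?_)
  rw [one_mul]
  exact norm_iterate_psi_one_le_pow X k

lemma exists_similar_posDef_one_sub_psi_of_tendsto
    (h : Tendsto (fun k => √‖(Psi X)^[k] 1‖) atTop (𝓝 0)) :
    ∃ S : Matrix N N ℂ, IsUnit S ∧ (1 - Psi (fun j => S⁻¹ * X j * S) 1).PosDef := by
  obtain ⟨m, hm⟩ := (h.eventually_lt_const one_pos).exists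
  rw [Real.sqrt_lt' one_pos, one_pow] at hm
  obtain ⟨P, hP, hstein⟩ := exists_posDef_sub_psi_posDef X hm
  exact exists_similar_posDef_one_sub_psi_of_stein X hP hstein

lemma jsr_lt_one_of_similar {S : Matrix N N ℂ} (hS : IsUnit S)
    (h : (1 - Psi (fun j => S⁻¹ * X j * S) 1).PosDef) : jsr X < 1 :=
  limsup_rpow_lt_one_of_le_geometric (norm_nonneg _)
    ((norm_lt_one_iff_posDef_one_sub (psi_nonneg (fun j => S⁻¹ * X j * S) zero_le_one)).2 h)
    (fun _ => norm_nonneg _) (norm_iterate_psi_one_le_of_similar X hS)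

end Psi

/-- The following are equivalent: `ρ(X) < 1`; the norms of the rows of degree-`k` monomials
`‖X^(k)‖ = ‖Ψ_X^k(I)‖^(1/2)` tend to `0`; and `X` is jointly similar to a strict row
contraction. -/
theorem stmt_5 {d n : ℕ} (X : Fin d → Matrix (Fin n) (Fin n) ℂ) :
    List.TFAE [jsr X < 1,
      Filter.Tendsto (fun k => Real.sqrt ‖(Psi X)^[k] 1‖) Filter.atTop (nhds 0),
      ∃ S : Matrix (Fin n) (Fin n) ℂ, IsUnit S ∧
        (1 - ∑ j, (S⁻¹ * X j * S) * (S⁻¹ * X j * S)ᴴ).PosDef] := by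
  tfae_have 1 → 2 := tendsto_sqrt_norm_iterate_psi_of_jsr_lt_one X
  tfae_have 2 → 3 := fun h => by
    simpa only [psi_one] using exists_similar_posDef_one_sub_psi_of_tendsto X h
  tfae_have 3 → 1 := fun ⟨S, hS, h⟩ => jsr_lt_one_of_similar X hS (by rwa [psi_one])
  tfae_finish
end

section
/- Let $I, J$ be ideals of the polynomial ring $\mathbb{C}[z_1,\dots,z_d]$, and for an ideal $K$ let $Z(K)$ denote the set of commuting $d$-tuples of complex matrices (of all finite sizes $n \ge 1$) on which every element of $K$ vanishes. Then $\mathbb{C}[z]/I$ and $\mathbb{C}[z]/J$ are isomorphic as $\mathbb{C}$-algebras if and only if there exist polynomial maps $F, G \in \mathbb{C}[z]^d$ restricting to mutually inverse bijections between $Z(J)$ and $Z(I)$. -/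
/-!
A commuting tuple `T` of `n × n` matrices is the same thing as an algebra homomorphism
`ℂ[z] → Mₙ(ℂ)`, `z_i ↦ T i`, and applying a polynomial map `F` to it amounts to precomposing
with `aeval F`. Hence each of the four zero-set conditions says that certain polynomials vanish
on a matrix zero set, and the matrix Nullstellensatz turns it into ideal membership: `aeval F`
maps `I` into `J`, `aeval G` maps `J` into `I`, `F ∘ G ≡ id` modulo `J` and `G ∘ F ≡ id` modulo
`I`. These say exactly that `aeval F` and `aeval G` descend to mutually inverse homomorphisms
between `ℂ[z]/I` and `ℂ[z]/J`.

For the Nullstellensatz, let `q ∉ K`. Krull's intersection theorem yields a maximal ideal `m` and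
`N` with `q ∉ K + m ^ N`. The quotient by `K + m ^ N` is Artinian, hence finite-dimensional, and
its regular representation is a point of `Z(K)` at which `q` does not vanish.
-/


/-- Evaluation of a commutative polynomial at a `d`-tuple of (commuting) `n × n` matrices. -/
noncomputable def evalMat {d n : ℕ} (X : Fin d → Matrix (Fin n) (Fin n) ℂ)
    (p : MvPolynomial (Fin d) ℂ) : Matrix (Fin n) (Fin n) ℂ :=
  ∑ m ∈ p.support, p.coeff m • (List.ofFn fun i => X i ^ m i).prod

/-- `X` belongs to the matrix zero set `Z(K)` of an ideal `K ⊴ ℂ[z₁,…,z_d]`: `X` is a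
commuting tuple annihilating every element of `K`. -/
def MemZeroSet {d : ℕ} (K : Ideal (MvPolynomial (Fin d) ℂ)) {n : ℕ}
    (X : Fin d → Matrix (Fin n) (Fin n) ℂ) : Prop :=
  (∀ i j, Commute (X i) (X j)) ∧ ∀ p ∈ K, evalMat X p = 0

open MvPolynomial

theorem Ideal.exists_isMaximal_notMem_pow_sup {R : Type*} [CommRing R] [IsNoetherianRing R]
    {K : Ideal R} {q : R} (hq : q ∉ K) :
    ∃ m : Ideal R, m.IsMaximal ∧ ∃ N : ℕ, q ∉ m ^ N ⊔ K := by
  have hcolon : K.colon (Ideal.span {q}) ≠ ⊤ := by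
    rwa [Ne, Submodule.colon_eq_top_iff_subset, SetLike.coe_subset_coe,
      Ideal.span_singleton_le_iff_mem]
  -- `m` contains the annihilator of `q` modulo `K`, which rules out the element `r` that Krull's
  -- intersection theorem produces below.
  obtain ⟨m, hm, hle⟩ := Ideal.exists_le_maximal _ hcolon
  refine ⟨m, hm, ?_⟩
  by_contra! hmem
  have hq_mem : Ideal.Quotient.mk K q ∈ (⨅ N : ℕ, m ^ N • ⊤ : Submodule R (R ⧸ K)) := by
    simp only [Submodule.mem_iInf, Ideal.smul_top_eq_map, Submodule.restrictScalars_mem]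
    exact fun N => Ideal.mem_quotient_iff_mem_sup.mpr (hmem N)
  obtain ⟨⟨r, hr⟩, hrq⟩ := (m.mem_iInf_smul_pow_eq_bot_iff _).mp hq_mem
  have h1r : 1 - r ∈ m := hle <| Ideal.mem_colon_span_singleton.mpr <| by
    rw [← Ideal.Quotient.eq_zero_iff_mem, sub_mul, one_mul, map_sub, sub_eq_zero]
    exact hrq.symm
  exact hm.ne_top ((Ideal.eq_top_iff_one m).mpr (by simpa using add_mem h1r hr))

theorem Module.finite_quotient_of_pow_le {k A : Type*} [Field k] [CommRing A] [Algebra k A]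
    [Algebra.FiniteType k A] {m L : Ideal A} [hm : m.IsMaximal] {N : ℕ} (h : m ^ N ≤ L) :
    Module.Finite k (A ⧸ L) := by
  have : IsNoetherianRing (A ⧸ L) := Algebra.FiniteType.isNoetherianRing k _
  have : Ring.KrullDimLE 0 (A ⧸ L) := Ring.KrullDimLE.mk₀ fun P hP => by
    have hmP : m ≤ P.comap (Ideal.Quotient.mk L) :=
      (hP.comap _).le_of_pow_le (h.trans (Ideal.mk_ker.symm.trans_le (Ideal.ker_le_comap _)))
    have hPm : (P.comap (Ideal.Quotient.mk L)).IsMaximal := by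
      rwa [← hm.eq_of_le (hP.comap _).ne_top hmP]
    exact Ideal.isMaximal_of_isIntegral_of_isMaximal_comap (R := A) _ hPm
  have : IsArtinianRing (A ⧸ L) := IsNoetherianRing.isArtinianRing_of_krullDimLE_zero
  exact Module.finite_of_isArtinianRing k _

section QuotientAlgEquiv

variable {R σ : Type*} [CommRing R]

theorem exists_aeval_lift_of_algHom {I J : Ideal (MvPolynomial σ R)}
    (φ : (MvPolynomial σ R ⧸ I) →ₐ[R] (MvPolynomial σ R ⧸ J)) :
    ∃ F : σ → MvPolynomial σ R,
      ∀ p, Ideal.Quotient.mk J (aeval F p) = φ (Ideal.Quotient.mk I p) := by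
  choose F hF using fun i => Ideal.Quotient.mk_surjective (φ (Ideal.Quotient.mk I (X i)))
  have h : (Ideal.Quotient.mkₐ R J).comp (aeval F) = φ.comp (Ideal.Quotient.mkₐ R I) :=
    algHom_ext fun i => by simp [hF]
  exact ⟨F, fun p => AlgHom.congr_fun h p⟩

theorem nonempty_algEquiv_quotient_iff (I J : Ideal (MvPolynomial σ R)) :
    Nonempty ((MvPolynomial σ R ⧸ I) ≃ₐ[R] (MvPolynomial σ R ⧸ J)) ↔
      ∃ F G : σ → MvPolynomial σ R, I ≤ J.comap (aeval F) ∧ J ≤ I.comap (aeval G) ∧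
        (∀ i, aeval F (G i) - X i ∈ J) ∧ (∀ i, aeval G (F i) - X i ∈ I) := by
  constructor
  · rintro ⟨e⟩
    obtain ⟨F, hF⟩ := exists_aeval_lift_of_algHom e.toAlgHom
    obtain ⟨G, hG⟩ := exists_aeval_lift_of_algHom e.symm.toAlgHom
    refine ⟨F, G, fun p hp => ?_, fun p hp => ?_, fun i => ?_, fun i => ?_⟩
    · rw [Ideal.mem_comap, ← Ideal.Quotient.eq_zero_iff_mem, hF,
        Ideal.Quotient.eq_zero_iff_mem.mpr hp, map_zero]
    · rw [Ideal.mem_comap, ← Ideal.Quotient.eq_zero_iff_mem, hG,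
        Ideal.Quotient.eq_zero_iff_mem.mpr hp, map_zero]
    · rw [← Ideal.Quotient.eq, hF, ← aeval_X (R := R) G i, hG]
      exact e.apply_symm_apply _
    · rw [← Ideal.Quotient.eq, hG, ← aeval_X (R := R) F i, hF]
      exact e.symm_apply_apply _
  · rintro ⟨F, G, hF, hG, hFG, hGF⟩
    refine ⟨AlgEquiv.ofAlgHom (Ideal.quotientMapₐ J (aeval F) hF)
      (Ideal.quotientMapₐ I (aeval G) hG) ?_ ?_⟩ <;>
      refine Ideal.Quotient.algHom_ext R (algHom_ext fun i => ?_)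
    · simpa [Ideal.Quotient.eq] using hFG i
    · simpa [Ideal.Quotient.eq] using hGF i

end QuotientAlgEquiv

section MatrixZeroSet

variable {d n : ℕ}

theorem evalMat_algHom_X (f : MvPolynomial (Fin d) ℂ →ₐ[ℂ] Matrix (Fin n) (Fin n) ℂ)
    (p : MvPolynomial (Fin d) ℂ) : evalMat (fun i => f (X i)) p = f p := by
  conv_rhs => rw [p.as_sum, map_sum]
  refine Finset.sum_congr rfl fun m _ => ?_
  rw [monomial_eq, Finsupp.prod_pow, ← List.prod_ofFn, map_mul, map_list_prod, List.map_ofFn,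
    algHom_C, Algebra.smul_def]
  simp [Function.comp_def]

open scoped IsMulCommutative in
noncomputable def evalMatAlgHom (T : Fin d → Matrix (Fin n) (Fin n) ℂ)
    (hT : ∀ i j, Commute (T i) (T j)) : MvPolynomial (Fin d) ℂ →ₐ[ℂ] Matrix (Fin n) (Fin n) ℂ :=
  have : IsMulCommutative (Algebra.adjoin ℂ (Set.range T)) :=
    Algebra.isMulCommutative_adjoin ℂ (by rintro _ ⟨i, rfl⟩ _ ⟨j, rfl⟩; exact hT i j)
  (Algebra.adjoin ℂ (Set.range T)).val.comp
    (aeval fun i => ⟨T i, Algebra.subset_adjoin ⟨i, rfl⟩⟩)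

variable {T : Fin d → Matrix (Fin n) (Fin n) ℂ}

@[simp]
theorem evalMatAlgHom_X (hT : ∀ i j, Commute (T i) (T j)) (i : Fin d) :
    evalMatAlgHom T hT (X i) = T i := by
  simp [evalMatAlgHom]

theorem coe_evalMatAlgHom (hT : ∀ i j, Commute (T i) (T j)) :
    ⇑(evalMatAlgHom T hT) = evalMat T := by
  funext p
  conv_rhs => rw [← funext (evalMatAlgHom_X hT)]
  exact (evalMat_algHom_X _ p).symm

theorem commute_evalMat (hT : ∀ i j, Commute (T i) (T j)) (p q : MvPolynomial (Fin d) ℂ) :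
    Commute (evalMat T p) (evalMat T q) := by
  rw [← coe_evalMatAlgHom hT]
  exact (Commute.all p q).map _

theorem evalMat_aeval (hT : ∀ i j, Commute (T i) (T j)) (H : Fin d → MvPolynomial (Fin d) ℂ)
    (p : MvPolynomial (Fin d) ℂ) :
    evalMat (fun i => evalMat T (H i)) p = evalMat T (aeval H p) := by
  simpa [coe_evalMatAlgHom hT] using evalMat_algHom_X ((evalMatAlgHom T hT).comp (aeval H)) p

theorem MemZeroSet.of_le {K L : Ideal (MvPolynomial (Fin d) ℂ)} (hKL : K ≤ L)
    (hT : MemZeroSet L T) : MemZeroSet K T :=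
  ⟨hT.1, fun p hp => hT.2 p (hKL hp)⟩

theorem exists_memZeroSet_forall_evalMat_eq_zero_mem (L : Ideal (MvPolynomial (Fin d) ℂ))
    [Module.Finite ℂ (MvPolynomial (Fin d) ℂ ⧸ L)] :
    ∃ (n : ℕ) (T : Fin d → Matrix (Fin n) (Fin n) ℂ),
      MemZeroSet L T ∧ ∀ q, evalMat T q = 0 → q ∈ L := by
  let b := Module.finBasis ℂ (MvPolynomial (Fin d) ℂ ⧸ L)
  let f := (LinearMap.toMatrixAlgEquiv b).toAlgHom.comp
    ((Algebra.lmul ℂ _).comp (Ideal.Quotient.mkₐ ℂ L))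
  have hf : ∀ q, evalMat (fun i => f (X i)) q = 0 ↔ q ∈ L := fun q => by
    rw [evalMat_algHom_X, ← Ideal.Quotient.eq_zero_iff_mem]
    change LinearMap.toMatrixAlgEquiv b (Algebra.lmul ℂ _ (Ideal.Quotient.mk L q)) = 0 ↔ _
    rw [map_eq_zero_iff _ (LinearMap.toMatrixAlgEquiv b).injective,
      map_eq_zero_iff _ Algebra.lmul_injective]
  exact ⟨_, fun i => f (X i), ⟨fun i j => (Commute.all _ _).map f, fun p hp => (hf p).2 hp⟩,
    fun q hq => (hf q).1 hq⟩

theorem mem_iff_forall_memZeroSet_evalMat_eq_zero {K : Ideal (MvPolynomial (Fin d) ℂ)}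
    {q : MvPolynomial (Fin d) ℂ} :
    q ∈ K ↔
      ∀ (n : ℕ) (T : Fin d → Matrix (Fin n) (Fin n) ℂ), MemZeroSet K T → evalMat T q = 0 := by
  refine ⟨fun hq n T hT => hT.2 q hq, fun h => ?_⟩
  by_contra hq
  obtain ⟨m, hm, N, hN⟩ := Ideal.exists_isMaximal_notMem_pow_sup hq
  have := Module.finite_quotient_of_pow_le (k := ℂ) (le_sup_left : m ^ N ≤ m ^ N ⊔ K)
  obtain ⟨n, T, hT, hT_mem⟩ := exists_memZeroSet_forall_evalMat_eq_zero_mem (m ^ N ⊔ K)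
  exact hN (hT_mem q (h n T (hT.of_le le_sup_right)))

theorem forall_memZeroSet_evalMat_iff (I J : Ideal (MvPolynomial (Fin d) ℂ))
    (F : Fin d → MvPolynomial (Fin d) ℂ) :
    (∀ (n : ℕ) (T : Fin d → Matrix (Fin n) (Fin n) ℂ), MemZeroSet J T →
        MemZeroSet I (fun i => evalMat T (F i))) ↔ I ≤ J.comap (aeval F) := by
  constructor
  · intro h p hp
    rw [Ideal.mem_comap, mem_iff_forall_memZeroSet_evalMat_eq_zero]
    intro n T hT
    rw [← evalMat_aeval hT.1]
    exact (h n T hT).2 p hp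
  · intro h n T hT
    refine ⟨fun i j => commute_evalMat hT.1 _ _, fun p hp => ?_⟩
    rw [evalMat_aeval hT.1]
    exact hT.2 _ (h hp)

theorem forall_evalMat_evalMat_eq_self_iff (J : Ideal (MvPolynomial (Fin d) ℂ))
    (F G : Fin d → MvPolynomial (Fin d) ℂ) :
    (∀ (n : ℕ) (T : Fin d → Matrix (Fin n) (Fin n) ℂ), MemZeroSet J T →
        (fun i => evalMat (fun i' => evalMat T (F i')) (G i)) = T) ↔
      ∀ i, aeval F (G i) - X i ∈ J := by
  have key : ∀ n (T : Fin d → Matrix (Fin n) (Fin n) ℂ), MemZeroSet J T → ∀ i,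
      (evalMat T (aeval F (G i) - X i) = 0 ↔
        evalMat (fun i' => evalMat T (F i')) (G i) = T i) := by
    intro n T hT i
    rw [evalMat_aeval hT.1, ← coe_evalMatAlgHom hT.1, map_sub, evalMatAlgHom_X, sub_eq_zero]
  simp_rw [mem_iff_forall_memZeroSet_evalMat_eq_zero, funext_iff]
  exact ⟨fun h i n T hT => (key n T hT i).2 (h n T hT i),
    fun h n T hT i => (key n T hT i).1 (h i n T hT)⟩

end MatrixZeroSet

/-- `ℂ[z]/I ≅ ℂ[z]/J` as `ℂ`-algebras iff there are polynomial maps `F, G` restricting to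
mutually inverse bijections between the matrix zero sets `Z(J)` and `Z(I)`. -/
theorem stmt_12 {d : ℕ} (I J : Ideal (MvPolynomial (Fin d) ℂ)) :
    Nonempty ((MvPolynomial (Fin d) ℂ ⧸ I) ≃ₐ[ℂ] (MvPolynomial (Fin d) ℂ ⧸ J)) ↔
    ∃ F G : Fin d → MvPolynomial (Fin d) ℂ,
      (∀ (n : ℕ) (X : Fin d → Matrix (Fin n) (Fin n) ℂ), MemZeroSet J X →
        MemZeroSet I (fun i => evalMat X (F i))) ∧
      (∀ (n : ℕ) (X : Fin d → Matrix (Fin n) (Fin n) ℂ), MemZeroSet I X →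
        MemZeroSet J (fun i => evalMat X (G i))) ∧
      (∀ (n : ℕ) (X : Fin d → Matrix (Fin n) (Fin n) ℂ), MemZeroSet J X →
        (fun i => evalMat (fun i' => evalMat X (F i')) (G i)) = X) ∧
      (∀ (n : ℕ) (X : Fin d → Matrix (Fin n) (Fin n) ℂ), MemZeroSet I X →
        (fun i => evalMat (fun i' => evalMat X (G i')) (F i)) = X) := by
  simp only [nonempty_algEquiv_quotient_iff, forall_memZeroSet_evalMat_iff,
    forall_evalMat_evalMat_eq_self_iff]
end

section
/- Let $I, J$ be homogeneous ideals in the free algebra $\mathbb{C}\langle z_1,\dots,z_d\rangle$. Then $\mathbb{C}\langle z\rangle/I$ and $\mathbb{C}\langle z\rangle/J$ are isomorphic as algebras if and only if there exist free polynomial maps $F, G$ (tuples of elements of $\mathbb{C}\langle z\rangle$) that restrict to mutually inverse bijections between the matrix zero sets $Z(J)$ and $Z(I)$, where $Z(K)$ is the set of $d$-tuples of matrices (of all sizes) annihilated by every element of $K$. -/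
/-- Evaluation of a free polynomial at a `d`-tuple of `n × n` matrices. -/
noncomputable def freeEvalMat {d n : ℕ} (X : Fin d → Matrix (Fin n) (Fin n) ℂ)
    (p : FreeAlgebra ℂ (Fin d)) : Matrix (Fin n) (Fin n) ℂ :=
  FreeAlgebra.lift ℂ X p

/-- The submodule of `n`-homogeneous elements of the free algebra `ℂ⟨z₁,…,z_d⟩`. -/
noncomputable def homogComponent (d : ℕ) (k : ℕ) : Submodule ℂ (FreeAlgebra ℂ (Fin d)) :=
  (Submodule.span ℂ (Set.range (FreeAlgebra.ι ℂ : Fin d → FreeAlgebra ℂ (Fin d)))) ^ k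

/-- A two-sided ideal of the free algebra is homogeneous if it is generated by homogeneous
elements. -/
def IsHomogeneousTwoSidedIdeal {d : ℕ} (I : TwoSidedIdeal (FreeAlgebra ℂ (Fin d))) : Prop :=
  ∃ S : Set (FreeAlgebra ℂ (Fin d)),
    (∀ x ∈ S, ∃ k, x ∈ homogComponent d k) ∧ I = TwoSidedIdeal.span S

/-- `X` belongs to the matrix zero set `Z(K)` of a two-sided ideal
`K ⊴ ℂ⟨z₁,…,z_d⟩`. -/
def MemFreeZeroSet {d : ℕ} (K : TwoSidedIdeal (FreeAlgebra ℂ (Fin d))) {n : ℕ}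
    (X : Fin d → Matrix (Fin n) (Fin n) ℂ) : Prop :=
  ∀ p ∈ K, freeEvalMat X p = 0

/-!
An algebra isomorphism `ℂ⟨z⟩/I ≅ ℂ⟨z⟩/J` is the same thing as two tuples `F, G` of free
polynomials (lifts of the images of the generators) whose substitution maps send `I` into `J`
and `J` into `I` and are mutually inverse modulo `J` and `I`. Each of these four ideal
memberships is equivalent, by the homogeneous Nullstellensatz, to the corresponding statement
about the zero sets `Z(I)` and `Z(J)`.

The Nullstellensatz: if `p` vanishes on `Z(K)` and `N` bounds the degree of `p`, the quotient of
`ℂ⟨z⟩` by `K + ℂ⟨z⟩_{>N}` is finite dimensional, and left multiplication on it is a point of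
`Z(K)` at which `p` acts by zero; applied to `1` this puts `p` in `K + ℂ⟨z⟩_{>N}`, so every
homogeneous component of `p` lies in `K`.
-/

open DirectSum

universe u

namespace TwoSidedIdeal

section GradedRing

variable {ι A σ : Type*} [DecidableEq ι] [AddMonoid ι] [Ring A] [SetLike σ A]
  [AddSubgroupClass σ A] (𝒜 : ι → σ) [GradedRing 𝒜]

def IsHomogeneous (K : TwoSidedIdeal A) : Prop :=
  ∀ x ∈ K, ∀ i, (decompose 𝒜 x i : A) ∈ K

def homogeneousCore (K : TwoSidedIdeal A) : TwoSidedIdeal A :=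
  .mk' {x | ∀ i, (decompose 𝒜 x i : A) ∈ K}
    (fun i => by simp)
    (fun hx hy i => by simpa using K.add_mem (hx i) (hy i))
    (fun hx i => by rw [decompose_neg]; exact K.neg_mem (hx i))
    (fun {a x} hx k => by
      classical
      rw [decompose_mul, coe_mul_apply]
      exact sum_mem fun ij _ => K.mul_mem_left _ _ (hx ij.2))
    (fun {x a} hx k => by
      classical
      rw [decompose_mul, coe_mul_apply]
      exact sum_mem fun ij _ => K.mul_mem_right _ _ (hx ij.1))

lemma mem_homogeneousCore {K : TwoSidedIdeal A} {x : A} :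
    x ∈ K.homogeneousCore 𝒜 ↔ ∀ i, (decompose 𝒜 x i : A) ∈ K :=
  mem_mk' ..

theorem isHomogeneous_span {S : Set A} (hS : ∀ s ∈ S, SetLike.IsHomogeneousElem 𝒜 s) :
    (span S).IsHomogeneous 𝒜 := by
  have : span S ≤ (span S).homogeneousCore 𝒜 := span_le.mpr fun s hs => by
    obtain ⟨m, hm⟩ := hS s hs
    refine (mem_homogeneousCore 𝒜).mpr fun i => ?_
    rw [decompose_of_mem 𝒜 hm, coe_of_apply]
    split_ifs
    · exact subset_span hs
    · exact zero_mem _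
  exact fun x hx => (mem_homogeneousCore 𝒜).mp (this hx)

end GradedRing

section Truncation

variable {𝕜 : Type*} {A : Type u} [Field 𝕜] [Ring A] [Algebra 𝕜 A] (𝒜 : ℕ → Submodule 𝕜 A)
  [GradedAlgebra 𝒜]

/-- For homogeneous `K` this is `K + ⨁_{k > N} 𝒜 k`. -/
def truncation (K : TwoSidedIdeal A) (N : ℕ) : Submodule A A where
  carrier := {x | ∀ k ≤ N, (decompose 𝒜 x k : A) ∈ K}
  zero_mem' k _ := by simp
  add_mem' hx hy k hk := by simpa using K.add_mem (hx k hk) (hy k hk)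
  smul_mem' a x hx k hk := by
    rw [smul_eq_mul, decompose_mul, coe_mul_apply_eq_sum_antidiagonal]
    exact sum_mem fun ij hij => K.mul_mem_left _ _
      (hx ij.2 ((Finset.HasAntidiagonal.antidiagonal.snd_le hij).trans hk))

variable {𝒜}

lemma mem_truncation_of_mem {K : TwoSidedIdeal A} (hK : K.IsHomogeneous 𝒜) (N : ℕ) {x : A}
    (hx : x ∈ K) : x ∈ K.truncation 𝒜 N :=
  fun k _ => hK x hx k

lemma mem_truncation_of_mem_of_lt (K : TwoSidedIdeal A) {N m : ℕ} (hm : N < m) {x : A}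
    (hx : x ∈ 𝒜 m) : x ∈ K.truncation 𝒜 N := fun k hk => by
  rw [decompose_of_mem_ne 𝒜 hx (by omega)]
  exact K.zero_mem

instance finite_quotient_truncation [h𝒜 : ∀ k, Module.Finite 𝕜 (𝒜 k)] (K : TwoSidedIdeal A)
    (N : ℕ) : Module.Finite 𝕜 (A ⧸ K.truncation 𝒜 N) := by
  let W : Submodule 𝕜 A := ⨆ k : Fin (N + 1), 𝒜 k
  have : Module.Finite 𝕜 W := Module.Finite.iff_fg.mpr
    (Submodule.fg_iSup _ fun k => Module.Finite.iff_fg.mp (h𝒜 k))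
  have hW : W ⊔ (K.truncation 𝒜 N).restrictScalars 𝕜 = ⊤ := by
    rw [eq_top_iff, ← (DirectSum.Decomposition.isInternal 𝒜).submodule_iSup_eq_top]
    refine iSup_le fun m => ?_
    rcases le_or_gt m N with hm | hm
    · exact (le_iSup (fun k : Fin (N + 1) => 𝒜 k) ⟨m, by omega⟩).trans le_sup_left
    · exact le_sup_of_le_right fun x hx => mem_truncation_of_mem_of_lt K hm hx
  refine Module.Finite.of_surjective
    (((K.truncation 𝒜 N).mkQ.restrictScalars 𝕜).comp W.subtype) ?_
  rintro ⟨x⟩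
  obtain ⟨w, hw, v, hv, rfl⟩ := Submodule.mem_sup.mp (hW ▸ Submodule.mem_top : x ∈ _)
  refine ⟨⟨w, hw⟩, (Submodule.Quotient.eq _).mpr ?_⟩
  simpa using (K.truncation 𝒜 N).neg_mem hv

theorem mem_of_forall_rep_eq_zero [∀ k, Module.Finite 𝕜 (𝒜 k)] {K : TwoSidedIdeal A}
    (hK : K.IsHomogeneous 𝒜) {p : A}
    (hp : ∀ (M : Type u) [AddCommGroup M] [Module 𝕜 M] [Module.Finite 𝕜 M]
      (ρ : A →ₐ[𝕜] Module.End 𝕜 M), (∀ q ∈ K, ρ q = 0) → ρ p = 0) :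
    p ∈ K := by
  classical
  let N := (decompose 𝒜 p).support.sup id
  have hρ : Algebra.lsmul 𝕜 𝕜 (A ⧸ K.truncation 𝒜 N) p = 0 := hp _ _ fun q hq => by
    refine LinearMap.ext fun y => Submodule.Quotient.induction_on _ y fun x => ?_
    exact (Submodule.Quotient.mk_eq_zero _).mpr
      (mem_truncation_of_mem hK N (K.mul_mem_right q x hq))
  have hpN : p ∈ K.truncation 𝒜 N := by
    simpa using (Submodule.Quotient.mk_eq_zero _).mp
      (LinearMap.congr_fun hρ (Submodule.Quotient.mk 1))
  rw [← sum_support_decompose 𝒜 p]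
  exact sum_mem fun k hk => hpN k (Finset.le_sup (f := id) hk)

end Truncation

end TwoSidedIdeal

theorem nonempty_algEquiv_iff_exists_ringEquiv {R A B : Type*} [CommSemiring R] [Semiring A]
    [Semiring B] [Algebra R A] [Algebra R B] :
    Nonempty (A ≃ₐ[R] B) ↔ ∃ e : A ≃+* B, ∀ c : R, e (algebraMap R A c) = algebraMap R B c :=
  ⟨fun ⟨e⟩ => ⟨e.toRingEquiv, e.commutes⟩, fun ⟨_, he⟩ => ⟨AlgEquiv.ofRingEquiv he⟩⟩

namespace TwoSidedIdeal

variable {R A B : Type*} [CommRing R] [Ring A] [Algebra R A] [Ring B] [Algebra R B]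

lemma mkₐ_eq_zero_iff (I : TwoSidedIdeal A) {x : A} : I.ringCon.mkₐ R x = 0 ↔ x ∈ I := by
  change (x : I.ringCon.Quotient) = ((0 : A) : I.ringCon.Quotient) ↔ _
  rw [RingCon.eq, rel_iff, sub_zero]

def liftQuotientₐ {I : TwoSidedIdeal A} {J : TwoSidedIdeal B} (f : A →ₐ[R] B)
    (hf : ∀ q ∈ I, f q ∈ J) : I.ringCon.Quotient →ₐ[R] J.ringCon.Quotient :=
  I.ringCon.liftₐ ((J.ringCon.mkₐ R).comp f) fun x y hxy => by
    change J.ringCon.mkₐ R (f x) = J.ringCon.mkₐ R (f y)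
    rw [← sub_eq_zero, ← map_sub, ← map_sub, mkₐ_eq_zero_iff]
    exact hf _ ((I.rel_iff x y).mp hxy)

lemma liftQuotientₐ_mk {I : TwoSidedIdeal A} {J : TwoSidedIdeal B} (f : A →ₐ[R] B)
    (hf : ∀ q ∈ I, f q ∈ J) (x : A) :
    liftQuotientₐ f hf (I.ringCon.mkₐ R x) = J.ringCon.mkₐ R (f x) :=
  rfl

end TwoSidedIdeal

namespace FreeAlgebra

section Quotient

variable {R X : Type*} [CommRing R] {I J : TwoSidedIdeal (FreeAlgebra R X)}

open TwoSidedIdeal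

lemma exists_mkₐ_lift_eq (f : I.ringCon.Quotient →ₐ[R] J.ringCon.Quotient) :
    ∃ F : X → FreeAlgebra R X, ∀ q, J.ringCon.mkₐ R (lift R F q) = f (I.ringCon.mkₐ R q) := by
  choose F hF using fun x =>
    RingCon.mkₐ_surjective (α := R) J.ringCon (f (I.ringCon.mkₐ R (ι R x)))
  have : (J.ringCon.mkₐ R).comp (lift R F) = f.comp (I.ringCon.mkₐ R) :=
    hom_ext (funext fun x => by simpa using hF x)
  exact ⟨F, fun q => congr($this q)⟩

lemma liftQuotientₐ_comp_eq_id {F G : X → FreeAlgebra R X} (hF : ∀ q ∈ I, lift R F q ∈ J)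
    (hG : ∀ q ∈ J, lift R G q ∈ I) (hFG : ∀ x, lift R F (G x) - ι R x ∈ J) :
    (liftQuotientₐ (lift R F) hF).comp (liftQuotientₐ (lift R G) hG) = AlgHom.id R _ :=
  RingCon.Quotient.hom_extₐ <| hom_ext <| funext fun x => by
    change liftQuotientₐ _ hF (liftQuotientₐ _ hG (J.ringCon.mkₐ R (ι R x))) =
      J.ringCon.mkₐ R (ι R x)
    rw [liftQuotientₐ_mk, lift_ι_apply, liftQuotientₐ_mk, ← sub_eq_zero, ← map_sub,
      mkₐ_eq_zero_iff]
    exact hFG x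

theorem nonempty_algEquiv_quotient_iff :
    Nonempty (I.ringCon.Quotient ≃ₐ[R] J.ringCon.Quotient) ↔
      ∃ F G : X → FreeAlgebra R X, (∀ q ∈ I, lift R F q ∈ J) ∧ (∀ q ∈ J, lift R G q ∈ I) ∧
        (∀ x, lift R F (G x) - ι R x ∈ J) ∧ (∀ x, lift R G (F x) - ι R x ∈ I) := by
  constructor
  · rintro ⟨e⟩
    obtain ⟨F, hF⟩ := exists_mkₐ_lift_eq (e : I.ringCon.Quotient →ₐ[R] J.ringCon.Quotient)
    obtain ⟨G, hG⟩ := exists_mkₐ_lift_eq (e.symm : J.ringCon.Quotient →ₐ[R] I.ringCon.Quotient)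
    refine ⟨F, G, fun q hq => ?_, fun q hq => ?_, fun x => ?_, fun x => ?_⟩
    · rw [← mkₐ_eq_zero_iff (R := R), hF, (mkₐ_eq_zero_iff I).mpr hq, map_zero]
    · rw [← mkₐ_eq_zero_iff (R := R), hG, (mkₐ_eq_zero_iff J).mpr hq, map_zero]
    · rw [← mkₐ_eq_zero_iff (R := R), map_sub, sub_eq_zero, hF, ← lift_ι_apply (R := R) G x,
        AlgEquiv.coe_toAlgHom, hG]
      exact e.apply_symm_apply _
    · rw [← mkₐ_eq_zero_iff (R := R), map_sub, sub_eq_zero, hG, ← lift_ι_apply (R := R) F x,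
        AlgEquiv.coe_toAlgHom, hF]
      exact e.symm_apply_apply _
  · rintro ⟨F, G, hF, hG, hFG, hGF⟩
    exact ⟨.ofAlgHom (liftQuotientₐ (lift R F) hF) (liftQuotientₐ (lift R G) hG)
      (liftQuotientₐ_comp_eq_id hF hG hFG) (liftQuotientₐ_comp_eq_id hG hF hGF)⟩

end Quotient

section Grading

variable {R X : Type*} [CommSemiring R]

variable (R X) in
abbrev grade (k : ℕ) : Submodule R (FreeAlgebra R X) :=
  Submodule.span R (Set.range (ι R)) ^ k

lemma ι_mem_grade_one (x : X) : ι R x ∈ grade R X 1 := by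
  rw [grade, pow_one]
  exact Submodule.subset_span ⟨x, rfl⟩

def decomposeGrade : FreeAlgebra R X →ₐ[R] ⨁ k, grade R X k :=
  lift R fun x => of (fun k => grade R X k) 1 ⟨ι R x, ι_mem_grade_one x⟩

lemma decomposeGrade_of_mem_span {m : FreeAlgebra R X}
    (hm : m ∈ Submodule.span R (Set.range (ι R))) :
    decomposeGrade m = of (fun k => grade R X k) 1 ⟨m, by rwa [grade, pow_one]⟩ := by
  induction hm using Submodule.span_induction with
  | mem _ hx =>
    obtain ⟨x, rfl⟩ := hx
    exact lift_ι_apply ..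
  | zero => exact (map_zero _).trans (map_zero (of _ 1)).symm
  | add x y hx hy ihx ihy =>
    rw [map_add, ihx, ihy, ← map_add]
    rfl
  | smul c x hx ihx =>
    rw [map_smul, ihx, ← lof_eq_of R, ← map_smul]
    rfl

instance gradedAlgebra : GradedAlgebra (grade R X) :=
  GradedAlgebra.ofAlgHom _ decomposeGrade
    (hom_ext <| funext fun x => by
      simp only [Function.comp_apply, AlgHom.comp_apply, AlgHom.id_apply, decomposeGrade,
        lift_ι_apply, coeAlgHom_of])
    fun i x => by
      obtain ⟨x, hx⟩ := x
      induction hx using Submodule.pow_induction_on_left' with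
      | algebraMap r =>
        rw [AlgHom.commutes, algebraMap_apply]; rfl
      | add x y i hx hy ihx ihy =>
        rw [map_add, ihx, ihy, ← AddMonoidHom.map_add]; rfl
      | mem_mul m hm i x hx ih =>
        rw [map_mul, ih, decomposeGrade_of_mem_span hm, of_mul_of]
        exact of_eq_of_gradedMonoid_eq (Sigma.subtype_ext (add_comm _ _) rfl)

end Grading

end FreeAlgebra

section FreeZeroSet

variable {d : ℕ}

instance : GradedAlgebra (homogComponent d) := FreeAlgebra.gradedAlgebra

instance (k : ℕ) : Module.Finite ℂ (homogComponent d k) :=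
  Module.Finite.iff_fg.mpr ((Submodule.fg_span (Set.finite_range _)).pow k)

lemma IsHomogeneousTwoSidedIdeal.isHomogeneous {K : TwoSidedIdeal (FreeAlgebra ℂ (Fin d))}
    (hK : IsHomogeneousTwoSidedIdeal K) : K.IsHomogeneous (homogComponent d) := by
  obtain ⟨S, hS, rfl⟩ := hK
  exact TwoSidedIdeal.isHomogeneous_span _ hS

lemma freeEvalMat_ι {n : ℕ} (X : Fin d → Matrix (Fin n) (Fin n) ℂ) (i : Fin d) :
    freeEvalMat X (FreeAlgebra.ι ℂ i) = X i :=
  FreeAlgebra.lift_ι_apply X i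

lemma freeEvalMat_sub {n : ℕ} (X : Fin d → Matrix (Fin n) (Fin n) ℂ)
    (p q : FreeAlgebra ℂ (Fin d)) :
    freeEvalMat X (p - q) = freeEvalMat X p - freeEvalMat X q :=
  map_sub _ p q

lemma freeEvalMat_comp_ι {n : ℕ} (φ : FreeAlgebra ℂ (Fin d) →ₐ[ℂ] Matrix (Fin n) (Fin n) ℂ)
    (p : FreeAlgebra ℂ (Fin d)) : freeEvalMat (fun i => φ (FreeAlgebra.ι ℂ i)) p = φ p :=
  congr($(FreeAlgebra.lift_comp_ι φ) p)

lemma freeEvalMat_lift {n : ℕ} (X : Fin d → Matrix (Fin n) (Fin n) ℂ)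
    (F : Fin d → FreeAlgebra ℂ (Fin d)) (p : FreeAlgebra ℂ (Fin d)) :
    freeEvalMat X (FreeAlgebra.lift ℂ F p) = freeEvalMat (fun i => freeEvalMat X (F i)) p := by
  simpa [freeEvalMat] using
    (freeEvalMat_comp_ι ((FreeAlgebra.lift ℂ X).comp (FreeAlgebra.lift ℂ F)) p).symm

lemma rep_eq_zero_of_forall_memFreeZeroSet {K : TwoSidedIdeal (FreeAlgebra ℂ (Fin d))}
    {p : FreeAlgebra ℂ (Fin d)}
    (hp : ∀ (n : ℕ) (X : Fin d → Matrix (Fin n) (Fin n) ℂ), MemFreeZeroSet K X →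
      freeEvalMat X p = 0)
    {M : Type*} [AddCommGroup M] [Module ℂ M] [Module.Finite ℂ M]
    (ρ : FreeAlgebra ℂ (Fin d) →ₐ[ℂ] Module.End ℂ M) (hρ : ∀ q ∈ K, ρ q = 0) : ρ p = 0 := by
  let toMatrix := LinearMap.toMatrixAlgEquiv (Module.finBasis ℂ M)
  have hφ := freeEvalMat_comp_ι (toMatrix.toAlgHom.comp ρ)
  have := hp _ _ fun q hq => by rw [hφ, AlgHom.comp_apply, hρ q hq, map_zero]
  rw [hφ, AlgHom.comp_apply] at this
  exact (map_eq_zero_iff _ toMatrix.injective).mp this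

theorem mem_of_forall_memFreeZeroSet {K : TwoSidedIdeal (FreeAlgebra ℂ (Fin d))}
    (hK : IsHomogeneousTwoSidedIdeal K) {p : FreeAlgebra ℂ (Fin d)}
    (hp : ∀ (n : ℕ) (X : Fin d → Matrix (Fin n) (Fin n) ℂ), MemFreeZeroSet K X →
      freeEvalMat X p = 0) : p ∈ K :=
  TwoSidedIdeal.mem_of_forall_rep_eq_zero hK.isHomogeneous fun _ _ _ _ ρ hρ =>
    rep_eq_zero_of_forall_memFreeZeroSet hp ρ hρ

lemma forall_memFreeZeroSet_map_iff {I J : TwoSidedIdeal (FreeAlgebra ℂ (Fin d))}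
    (hJ : IsHomogeneousTwoSidedIdeal J) (F : Fin d → FreeAlgebra ℂ (Fin d)) :
    (∀ (n : ℕ) (X : Fin d → Matrix (Fin n) (Fin n) ℂ), MemFreeZeroSet J X →
      MemFreeZeroSet I (fun i => freeEvalMat X (F i))) ↔
    ∀ q ∈ I, FreeAlgebra.lift ℂ F q ∈ J := by
  refine ⟨fun h q hq => mem_of_forall_memFreeZeroSet hJ fun n X hX => ?_,
    fun h n X hX q hq => ?_⟩
  · rw [freeEvalMat_lift]
    exact h n X hX q hq
  · rw [← freeEvalMat_lift]
    exact hX _ (h q hq)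

lemma forall_memFreeZeroSet_comp_eq_iff {J : TwoSidedIdeal (FreeAlgebra ℂ (Fin d))}
    (hJ : IsHomogeneousTwoSidedIdeal J) (F G : Fin d → FreeAlgebra ℂ (Fin d)) :
    (∀ (n : ℕ) (X : Fin d → Matrix (Fin n) (Fin n) ℂ), MemFreeZeroSet J X →
      (fun i => freeEvalMat (fun i' => freeEvalMat X (F i')) (G i)) = X) ↔
    ∀ i, FreeAlgebra.lift ℂ F (G i) - FreeAlgebra.ι ℂ i ∈ J := by
  refine ⟨fun h i => mem_of_forall_memFreeZeroSet hJ fun n X hX => ?_,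
    fun h n X hX => funext fun i => ?_⟩
  · rw [freeEvalMat_sub, freeEvalMat_lift, congr_fun (h n X hX) i, freeEvalMat_ι, sub_self]
  · have := hX _ (h i)
    rwa [freeEvalMat_sub, freeEvalMat_lift, freeEvalMat_ι, sub_eq_zero] at this

end FreeZeroSet

/-- For homogeneous two-sided ideals `I, J` of `ℂ⟨z⟩`, the quotient algebras
`ℂ⟨z⟩/I` and `ℂ⟨z⟩/J` are isomorphic as `ℂ`-algebras (i.e. via a ring isomorphism
commuting with the `ℂ`-scalars) iff there are free polynomial maps `F, G` restricting to
mutually inverse bijections between `Z(J)` and `Z(I)`. -/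
theorem stmt_13 {d : ℕ} (I J : TwoSidedIdeal (FreeAlgebra ℂ (Fin d)))
    (hI : IsHomogeneousTwoSidedIdeal I) (hJ : IsHomogeneousTwoSidedIdeal J) :
    (∃ e : I.ringCon.Quotient ≃+* J.ringCon.Quotient,
      ∀ c : ℂ, e ((algebraMap ℂ (FreeAlgebra ℂ (Fin d)) c : FreeAlgebra ℂ (Fin d)) :
          I.ringCon.Quotient) =
        ((algebraMap ℂ (FreeAlgebra ℂ (Fin d)) c : FreeAlgebra ℂ (Fin d)) :
          J.ringCon.Quotient)) ↔
    ∃ F G : Fin d → FreeAlgebra ℂ (Fin d),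
      (∀ (n : ℕ) (X : Fin d → Matrix (Fin n) (Fin n) ℂ), MemFreeZeroSet J X →
        MemFreeZeroSet I (fun i => freeEvalMat X (F i))) ∧
      (∀ (n : ℕ) (X : Fin d → Matrix (Fin n) (Fin n) ℂ), MemFreeZeroSet I X →
        MemFreeZeroSet J (fun i => freeEvalMat X (G i))) ∧
      (∀ (n : ℕ) (X : Fin d → Matrix (Fin n) (Fin n) ℂ), MemFreeZeroSet J X →
        (fun i => freeEvalMat (fun i' => freeEvalMat X (F i')) (G i)) = X) ∧
      (∀ (n : ℕ) (X : Fin d → Matrix (Fin n) (Fin n) ℂ), MemFreeZeroSet I X →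
        (fun i => freeEvalMat (fun i' => freeEvalMat X (G i')) (F i)) = X) := by
  simp only [RingCon.coe_algebraMap, ← nonempty_algEquiv_iff_exists_ringEquiv,
    forall_memFreeZeroSet_map_iff hI, forall_memFreeZeroSet_map_iff hJ,
    forall_memFreeZeroSet_comp_eq_iff hI, forall_memFreeZeroSet_comp_eq_iff hJ]
  exact FreeAlgebra.nonempty_algEquiv_quotient_iff
end

section
/- Let $q \in \mathbb{C}$ be nonzero and not a root of unity, and let $(X, Y)$ be a pair of $n\times n$ matrices with $n > 1$ satisfying $XY = qYX$. Then $(X,Y)$ is reducible, i.e., $X$ and $Y$ have a common invariant subspace other than $0$ and $\mathbb{C}^n$. -/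
/-!
If `XY = qYX` then `Y` maps the `μ`-eigenspace of `X` into its `qμ`-eigenspace. When `q` is not a
root of unity, the eigenvalues `q ^ k * λ` (`λ ≠ 0`) are pairwise distinct, so among finitely many
eigenvalues of `X` there is one, `μ`, whose eigenspace `Y` preserves: `μ = 0` if `X` is singular,
and otherwise any `μ` for which `qμ` is not an eigenvalue, so that `Y` kills the eigenspace.
An eigenvector of `Y` in that eigenspace is a common eigenvector, and its span is a nontrivial
common invariant subspace as soon as `n > 1`.
-/

open Module Module.End

lemma injective_pow_mul {K : Type*} [Field K] {q μ : K} (hq0 : q ≠ 0)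
    (hq : ∀ k : ℕ, 0 < k → q ^ k ≠ 1) (hμ : μ ≠ 0) :
    Function.Injective fun k : ℕ ↦ q ^ k * μ := by
  have hq' : ¬IsOfFinOrder (Units.mk0 q hq0) := by
    intro h
    obtain ⟨k, hk, hk1⟩ := isOfFinOrder_iff_pow_eq_one.1 h
    exact hq k hk (by simpa [Units.ext_iff] using hk1)
  intro i j hij
  exact injective_pow_iff_not_isOfFinOrder.2 hq' (Units.ext (by simpa [hμ] using hij))

section

variable {K V : Type*} [Field K] [AddCommGroup V] [Module K V] {f g : End K V} {q : K}

lemma apply_mem_eigenspace_mul_of_mul_eq_smul (hfg : f * g = q • (g * f)) {μ : K} {v : V}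
    (hv : v ∈ f.eigenspace μ) : g v ∈ f.eigenspace (q * μ) := by
  rw [mem_eigenspace_iff] at hv ⊢
  rw [← mul_apply, hfg, LinearMap.smul_apply, mul_apply, hv, map_smul,
    smul_smul]

lemma map_span_singleton_le_of_hasEigenvector {μ : K} {v : V} (h : f.HasEigenvector μ v) :
    (K ∙ v).map f ≤ K ∙ v := by
  rw [Submodule.map_span, Set.image_singleton, Submodule.span_singleton_le_iff_mem,
    h.apply_eq_smul]
  exact Submodule.smul_mem _ _ (Submodule.mem_span_singleton_self v)

lemma span_singleton_ne_top_of_one_lt_finrank (h : 1 < finrank K V) (v : V) : K ∙ v ≠ ⊤ := by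
  intro htop
  have := finrank_span_le_card (R := K) ({v} : Set V)
  rw [htop, finrank_top] at this
  simp at this
  omega

variable [FiniteDimensional K V]

lemma exists_hasEigenvalue_not_hasEigenvalue_mul (hq0 : q ≠ 0)
    (hq : ∀ k : ℕ, 0 < k → q ^ k ≠ 1) {a : K} (ha : f.HasEigenvalue a) (ha0 : a ≠ 0) :
    ∃ μ, f.HasEigenvalue μ ∧ ¬f.HasEigenvalue (q * μ) := by
  by_contra! h
  have hpow (k : ℕ) : f.HasEigenvalue (q ^ k * a) := by
    induction k with
    | zero => simpa using ha
    | succ k ih => simpa [pow_succ', mul_assoc] using h _ ih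
  exact Set.infinite_of_injective_forall_mem (injective_pow_mul hq0 hq ha0) hpow
    f.finite_hasEigenvalue

lemma exists_hasEigenvalue_mapsTo_eigenspace [IsAlgClosed K] [Nontrivial V]
    (hq0 : q ≠ 0) (hq : ∀ k : ℕ, 0 < k → q ^ k ≠ 1) (hfg : f * g = q • (g * f)) :
    ∃ μ, f.HasEigenvalue μ ∧ ∀ v ∈ f.eigenspace μ, g v ∈ f.eigenspace μ := by
  by_cases h0 : f.HasEigenvalue 0
  · refine ⟨0, h0, fun v hv ↦ ?_⟩
    simpa using apply_mem_eigenspace_mul_of_mul_eq_smul hfg hv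
  obtain ⟨a, ha⟩ := f.exists_eigenvalue
  obtain ⟨μ, hμ, hqμ⟩ := exists_hasEigenvalue_not_hasEigenvalue_mul hq0 hq ha
    (by rintro rfl; exact h0 ha)
  refine ⟨μ, hμ, fun v hv ↦ ?_⟩
  have := apply_mem_eigenspace_mul_of_mul_eq_smul hfg hv
  rw [hasEigenvalue_iff, not_not] at hqμ
  rw [hqμ, Submodule.mem_bot] at this
  exact this ▸ zero_mem _

lemma exists_hasEigenvector_hasEigenvector [IsAlgClosed K] [Nontrivial V]
    (hq0 : q ≠ 0) (hq : ∀ k : ℕ, 0 < k → q ^ k ≠ 1) (hfg : f * g = q • (g * f)) :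
    ∃ μ ν v, f.HasEigenvector μ v ∧ g.HasEigenvector ν v := by
  obtain ⟨μ, hμ, hgμ⟩ := exists_hasEigenvalue_mapsTo_eigenspace hq0 hq hfg
  have : Nontrivial (f.eigenspace μ) := Submodule.nontrivial_iff_ne_bot.2 hμ
  obtain ⟨ν, hν⟩ := exists_eigenvalue (g.restrict hgμ)
  obtain ⟨⟨v, hvμ⟩, hv⟩ := hν.exists_hasEigenvector
  have hv0 : v ≠ 0 := by simpa using hv.2
  refine ⟨μ, ν, v, ⟨hvμ, hv0⟩, ⟨?_, hv0⟩⟩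
  rw [mem_eigenspace_iff]
  simpa using congr_arg Subtype.val hv.apply_eq_smul

end

/-- If `q ≠ 0` is not a root of unity and `XY = qYX` with `n > 1`, then `(X, Y)` is
reducible: there is a common invariant subspace other than `⊥` and `⊤`. -/
theorem stmt_15 {n : ℕ} (hn : 1 < n) (q : ℂ) (hq0 : q ≠ 0)
    (hq : ∀ k : ℕ, 0 < k → q ^ k ≠ 1)
    (X Y : Matrix (Fin n) (Fin n) ℂ) (hXY : X * Y = q • (Y * X)) :
    ∃ K : Submodule ℂ (Fin n → ℂ), K ≠ ⊥ ∧ K ≠ ⊤ ∧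
      K.map X.mulVecLin ≤ K ∧ K.map Y.mulVecLin ≤ K := by
  have : Nonempty (Fin n) := ⟨⟨0, by omega⟩⟩
  have hfg : X.mulVecLin * Y.mulVecLin = q • (Y.mulVecLin * X.mulVecLin) := by
    simp only [mul_eq_comp, ← Matrix.mulVecLin_mul, hXY]
    exact LinearMap.ext fun v ↦ Matrix.smul_mulVec q (Y * X) v
  obtain ⟨μ, ν, v, hX, hY⟩ := exists_hasEigenvector_hasEigenvector hq0 hq hfg
  refine ⟨ℂ ∙ v, by simpa using hX.2, ?_, map_span_singleton_le_of_hasEigenvector hX,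
    map_span_singleton_le_of_hasEigenvector hY⟩
  exact span_singleton_ne_top_of_one_lt_finrank (by rwa [Module.finrank_fin_fun]) v
end

section
/- Let $V$ be a finite-dimensional real vector space and $z \mapsto T_z$ a smooth map from the open unit disc (viewed as an open subset of $\mathbb{R}^2$) to the space of linear endomorphisms of $V$. Assume $0$ is an eigenvalue of algebraic multiplicity $1$ of $T_z$ for every $z$. Then for every nonzero $v_0 \in \ker T_0$ there exist $s > 0$ and a smooth function $v: s\mathbb{D} \to V$ with $v(0) = v_0$ such that $\ker T_z = \mathrm{span}\{v(z)\}$ for all $z \in s\mathbb{D}$. -/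
/-- Smooth selection of the kernel: if `z ↦ T_z` is smooth on the unit disc of `ℝ²` and `0`
is an eigenvalue of algebraic multiplicity `1` of each `T_z`, then near `0` the kernel of
`T_z` is spanned by a smooth nonvanishing vector field `v(z)` with `v(0) = v₀`. -/
theorem stmt_19 {V : Type*} [NormedAddCommGroup V] [NormedSpace ℝ V]
    [FiniteDimensional ℝ V]
    (T : ℝ × ℝ → (V →L[ℝ] V))
    (hT : ContDiffOn ℝ (⊤ : ℕ∞) T (Metric.ball (0 : ℝ × ℝ) 1))
    (hmult : ∀ z ∈ Metric.ball (0 : ℝ × ℝ) 1,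
      Module.finrank ℝ (Module.End.maxGenEigenspace ((T z).toLinearMap) 0) = 1)
    (v₀ : V) (hv₀ : v₀ ≠ 0) (hker : v₀ ∈ LinearMap.ker (T 0).toLinearMap) :
    ∃ s : ℝ, 0 < s ∧ s ≤ 1 ∧ ∃ v : ℝ × ℝ → V,
      ContDiffOn ℝ (⊤ : ℕ∞) v (Metric.ball (0 : ℝ × ℝ) s) ∧ v 0 = v₀ ∧
      ∀ z ∈ Metric.ball (0 : ℝ × ℝ) s,
        LinearMap.ker (T z).toLinearMap = Submodule.span ℝ {v z} := by
  classical
  have h01 : (0 : ℝ × ℝ) ∈ Metric.ball (0 : ℝ × ℝ) 1 := by simp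
  -- a functional with φ v₀ = 1
  obtain ⟨g, hg1, hgv⟩ := exists_dual_vector ℝ v₀ (norm_ne_zero_iff.mpr hv₀)
  set φ : V →L[ℝ] ℝ := ‖v₀‖⁻¹ • g with hφdef
  have hφv : φ v₀ = 1 := by
    simp only [hφdef, ContinuousLinearMap.smul_apply, hgv, smul_eq_mul]
    exact inv_mul_cancel₀ (norm_ne_zero_iff.mpr hv₀)
  set P : V →L[ℝ] V := φ.smulRight v₀ with hPdef
  have hP : ∀ x, P x = φ x • v₀ := fun x => rfl
  set F : ℝ × ℝ → (V →L[ℝ] V) := fun z => T z + P with hFdef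
  have hFapp : ∀ z x, F z x = T z x + φ x • v₀ := fun z x => rfl
  -- basic kernel facts
  have hker_le : ∀ z, LinearMap.ker (T z).toLinearMap ≤
      Module.End.maxGenEigenspace ((T z).toLinearMap) 0 := by
    intro z x hx
    rw [Module.End.mem_maxGenEigenspace]
    exact ⟨1, by simpa [pow_one] using (LinearMap.mem_ker.mp hx)⟩
  have hker_ne : ∀ z ∈ Metric.ball (0 : ℝ × ℝ) 1, LinearMap.ker (T z).toLinearMap ≠ ⊥ := by
    intro z hz hbot
    have hinj : Function.Injective (T z) := by
      intro a b hab
      have hm : a - b ∈ LinearMap.ker (T z).toLinearMap := by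
        rw [LinearMap.mem_ker, map_sub]; exact sub_eq_zero.mpr hab
      rw [hbot, Submodule.mem_bot] at hm
      exact sub_eq_zero.mp hm
    have hpow : ∀ (k : ℕ) (x : V), (((T z).toLinearMap) ^ k) x = 0 → x = 0 := by
      intro k
      induction k with
      | zero => intro x hx; simpa using hx
      | succ k ih =>
        intro x hx
        rw [pow_succ, Module.End.mul_apply] at hx
        have := ih _ hx
        exact hinj (by simpa using this)
    have : Module.End.maxGenEigenspace ((T z).toLinearMap) 0 = ⊥ := by
      rw [Submodule.eq_bot_iff]
      intro x hx
      rw [Module.End.mem_maxGenEigenspace] at hx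
      obtain ⟨k, hk⟩ := hx
      exact hpow k x (by simpa using hk)
    have h1 := hmult z hz
    rw [this] at h1
    simp [finrank_bot] at h1
  have hker_rank : ∀ z ∈ Metric.ball (0 : ℝ × ℝ) 1,
      Module.finrank ℝ (LinearMap.ker (T z).toLinearMap) = 1 := by
    intro z hz
    have hle : Module.finrank ℝ (LinearMap.ker (T z).toLinearMap) ≤ 1 := by
      have := Submodule.finrank_mono (hker_le z)
      rwa [hmult z hz] at this
    have hpos : Module.finrank ℝ (LinearMap.ker (T z).toLinearMap) ≠ 0 := by
      intro h0
      exact hker_ne z hz (Submodule.finrank_eq_zero.mp h0)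
    omega
  have hker0 : LinearMap.ker (T 0).toLinearMap = Submodule.span ℝ {v₀} := by
    refine (Submodule.eq_of_le_of_finrank_le ?_ ?_).symm
    · rwa [Submodule.span_singleton_le_iff_mem]
    · rw [hker_rank 0 h01, finrank_span_singleton hv₀]
  -- v₀ is not in the range of T 0
  have hnotrange : ∀ w : V, T 0 w ≠ v₀ := by
    intro w hw
    have hmem : w ∈ Module.End.maxGenEigenspace ((T 0).toLinearMap) 0 := by
      rw [Module.End.mem_maxGenEigenspace]
      refine ⟨2, ?_⟩
      have : ((T 0).toLinearMap ^ 2) w = T 0 (T 0 w) := by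
        rw [pow_two]; rfl
      simp only [zero_smul, sub_zero, this, hw]
      exact LinearMap.mem_ker.mp hker
    have heq : LinearMap.ker (T 0).toLinearMap =
        Module.End.maxGenEigenspace ((T 0).toLinearMap) 0 := by
      apply Submodule.eq_of_le_of_finrank_le (hker_le 0)
      rw [hmult 0 h01, hker_rank 0 h01]
    rw [← heq] at hmem
    have : T 0 w = 0 := LinearMap.mem_ker.mp hmem
    rw [hw] at this
    exact hv₀ this
  -- F 0 is injective, hence a unit
  have hF0key : ∀ u : V, F 0 u = 0 → u = 0 := by
    intro u hu
    have hu' : T 0 u + φ u • v₀ = 0 := hu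
    by_cases hφu : φ u = 0
    · have hTu : T 0 u = 0 := by rw [hφu, zero_smul, add_zero] at hu'; exact hu'
      have : u ∈ Submodule.span ℝ {v₀} := by
        rw [← hker0]; exact LinearMap.mem_ker.mpr hTu
      obtain ⟨c, rfl⟩ := Submodule.mem_span_singleton.mp this
      have : c * φ v₀ = 0 := by simpa using hφu
      rw [hφv, mul_one] at this
      rw [this, zero_smul]
    · exfalso
      apply hnotrange ((-(φ u))⁻¹ • u)
      rw [map_smul]
      have hTu : T 0 u = (-(φ u)) • v₀ := by
        rw [neg_smul]
        exact eq_neg_of_add_eq_zero_left hu'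
      rw [hTu, smul_smul, inv_mul_cancel₀ (by simpa using hφu), one_smul]
  have hF0inj : Function.Injective (F 0) := by
    intro a b hab
    have h := hF0key (a - b) (by rw [map_sub, hab, sub_self])
    exact sub_eq_zero.mp h
  have hF0unit : IsUnit (F 0) := by
    have hbij : Function.Bijective ((F 0).toLinearMap) :=
      ⟨hF0inj, (LinearMap.injective_iff_surjective).mp hF0inj⟩
    let e : V ≃L[ℝ] V := (LinearEquiv.ofBijective (F 0).toLinearMap hbij).toContinuousLinearEquiv
    refine isUnit_iff_exists.mpr ⟨e.symm.toContinuousLinearMap, ?_, ?_⟩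
    · ext x
      exact e.apply_symm_apply x
    · ext x
      exact e.symm_apply_apply x
  -- injectivity from units
  have hinj_of_unit : ∀ {f : V →L[ℝ] V}, IsUnit f → Function.Injective f := by
    rintro f ⟨u, rfl⟩
    have hli : Function.LeftInverse (↑u⁻¹ : V →L[ℝ] V) ↑u := by
      intro x
      calc (↑u⁻¹ : V →L[ℝ] V) ((↑u : V →L[ℝ] V) x)
          = ((↑u⁻¹ * ↑u : V →L[ℝ] V)) x := rfl
        _ = x := by rw [u.inv_mul]; rfl
    exact hli.injective
  -- choose s
  have hFcontDiffAt : ∀ z ∈ Metric.ball (0 : ℝ × ℝ) 1, ContDiffAt ℝ (⊤ : ℕ∞) F z := by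
    intro z hz
    exact ((hT.contDiffAt (Metric.isOpen_ball.mem_nhds hz)).add contDiffAt_const)
  have hN : {z : ℝ × ℝ | IsUnit (F z)} ∈ nhds (0 : ℝ × ℝ) :=
    (hFcontDiffAt 0 h01).continuousAt.preimage_mem_nhds (Units.isOpen.mem_nhds hF0unit)
  obtain ⟨ε, hε, hball⟩ := Metric.mem_nhds_iff.mp hN
  refine ⟨min ε 1, lt_min hε one_pos, min_le_right _ _,
    fun z => Ring.inverse (F z) v₀, ?_, ?_, ?_⟩
  · -- smoothness
    intro z hz
    have hz1 : z ∈ Metric.ball (0 : ℝ × ℝ) 1 :=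
      Metric.ball_subset_ball (min_le_right ε 1) hz
    have hzu : IsUnit (F z) := hball (Metric.ball_subset_ball (min_le_left ε 1) hz)
    obtain ⟨u, hu⟩ := hzu
    have hinv : ContDiffAt ℝ (⊤ : ℕ∞) (fun w => Ring.inverse (F w)) z := by
      have h1 : ContDiffAt ℝ (⊤ : ℕ∞) (Ring.inverse : (V →L[ℝ] V) → (V →L[ℝ] V)) (F z) := by
        rw [← hu]; exact contDiffAt_ringInverse ℝ u
      exact h1.comp z (hFcontDiffAt z hz1)
    exact (hinv.clm_apply contDiffAt_const).contDiffWithinAt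
  · -- v 0 = v₀
    have h1 : F 0 (Ring.inverse (F 0) v₀) = v₀ := by
      have := Ring.mul_inverse_cancel (F 0) hF0unit
      calc F 0 (Ring.inverse (F 0) v₀) = (F 0 * Ring.inverse (F 0)) v₀ := rfl
        _ = (1 : V →L[ℝ] V) v₀ := by rw [this]
        _ = v₀ := rfl
    have h2 : F 0 v₀ = v₀ := by
      rw [hFapp, (by exact LinearMap.mem_ker.mp hker : T 0 v₀ = 0), hφv, one_smul, zero_add]
    exact hF0inj (by rw [h1, h2])
  · -- kernel identification
    intro z hz
    have hz1 : z ∈ Metric.ball (0 : ℝ × ℝ) 1 :=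
      Metric.ball_subset_ball (min_le_right ε 1) hz
    have hzu : IsUnit (F z) := hball (Metric.ball_subset_ball (min_le_left ε 1) hz)
    have hFzinj : Function.Injective (F z) := hinj_of_unit hzu
    obtain ⟨u0, hu0mem, hu0ne⟩ :=
      Submodule.exists_mem_ne_zero_of_ne_bot (hker_ne z hz1)
    have hTu0 : T z u0 = 0 := LinearMap.mem_ker.mp hu0mem
    have hφu0 : φ u0 ≠ 0 := by
      intro h0
      apply hu0ne
      apply hFzinj
      rw [hFapp, hFapp, hTu0, h0]
      simp
    have hkey : Ring.inverse (F z) v₀ = (φ u0)⁻¹ • u0 := by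
      apply hFzinj
      have h1 : F z (Ring.inverse (F z) v₀) = v₀ := by
        have := Ring.mul_inverse_cancel (F z) hzu
        calc F z (Ring.inverse (F z) v₀) = (F z * Ring.inverse (F z)) v₀ := rfl
          _ = (1 : V →L[ℝ] V) v₀ := by rw [this]
          _ = v₀ := rfl
      have h2 : F z ((φ u0)⁻¹ • u0) = v₀ := by
        rw [map_smul, hFapp, hTu0, zero_add, smul_smul, inv_mul_cancel₀ hφu0, one_smul]
      rw [h1, h2]
    have hvmem : Ring.inverse (F z) v₀ ∈ LinearMap.ker (T z).toLinearMap := by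
      rw [hkey]
      exact Submodule.smul_mem _ _ hu0mem
    have hvne : Ring.inverse (F z) v₀ ≠ 0 := by
      rw [hkey]
      exact smul_ne_zero (inv_ne_zero hφu0) hu0ne
    refine (Submodule.eq_of_le_of_finrank_le ?_ ?_).symm
    · rwa [Submodule.span_singleton_le_iff_mem]
    · rw [hker_rank z hz1, finrank_span_singleton hvne]
end
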